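/- arXiv:2109.15268 — 2 statements merged into one kernel-verified Lean document; each statement's English description precedes it below -/
import Mathlib

section
/- Let (s,t) be the twist pair of a uv-path P of a uv-straight graph G. Then P[u,s] and P[t,v] are vertex-disjoint if and only if P is not a shortest uv-path of G. -/
open SimpleGraph

variable {V : Type*}

/-- A walk is monotone if its vertices have pairwise distinct heights. -/
def MonoWalk (G : SimpleGraph V) (u : V) {x y : V} (W : G.Walk x y) : Prop :=
  (W.support.map (fun z => G.dist u z)).Nodup

/-- `P` is a shortest `x`-`y` path of `G`. -/
def IsShortestPath (G : SimpleGraph V) {x y : V} (P : G.Walk x y) : Prop :=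
  P.IsPath ∧ P.length = G.dist x y

/-- `P` is an induced path of `G`: a path that equals the subgraph of `G`
induced by its vertex set. -/
def IsInducedPath (G : SimpleGraph V) {x y : V} (P : G.Walk x y) : Prop :=
  P.IsPath ∧ ∀ a b : V, a ∈ P.support → b ∈ P.support → G.Adj a b → P.toSubgraph.Adj a b

/-- A `uv`-trail of `G`: an induced `uv`-path of `G` that is not a shortest
`uv`-path of `G`. -/
def IsTrailPath (G : SimpleGraph V) (u v : V) (P : G.Walk u v) : Prop :=
  IsInducedPath G P ∧ ¬ IsShortestPath G P

/-- A shortest `uv`-trail of `G`: a `uv`-trail of minimum number of edges. -/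
def IsShortestTrail (G : SimpleGraph V) (u v : V) (P : G.Walk u v) : Prop :=
  IsTrailPath G u v P ∧ ∀ Q : G.Walk u v, IsTrailPath G u v Q → P.length ≤ Q.length

/-- `G` is `uv`-straight: every vertex lies on a shortest `uv`-path of `G`. -/
def Straight (G : SimpleGraph V) (u v : V) : Prop :=
  ∀ x : V, ∃ P : G.Walk u v, IsShortestPath G P ∧ x ∈ P.support

/-- Vertex sets `X` and `Y` are anticomplete in `G`: they are disjoint and there
is no edge of `G` between them. -/
def Anticomplete (G : SimpleGraph V) (X Y : Set V) : Prop :=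
  ∀ x ∈ X, ∀ y ∈ Y, x ≠ y ∧ ¬ G.Adj x y

/-- `x` and `y` are connected in the subgraph of `G` induced by `A`. -/
def ConnIn (G : SimpleGraph V) (A : Set V) (x y : V) : Prop :=
  ∃ W : G.Walk x y, ∀ z ∈ W.support, z ∈ A

/-- The closed neighborhood `N_G[A]` of a vertex set `A`. -/
def closedNbhd (G : SimpleGraph V) (A : Set V) : Set V :=
  {y | y ∈ A ∨ ∃ x ∈ A, G.Adj x y}

/-- `(s, t)` is the twist pair of the `uv`-path `P`: `P[u,s]` is the maximal
monotone prefix of `P` and `P[t,v]` is the maximal monotone suffix of `P`. -/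
def IsTwistPair [DecidableEq V] (G : SimpleGraph V) (u v : V) (P : G.Walk u v)
    (s t : V) : Prop :=
  ∃ (hs : s ∈ P.support) (ht : t ∈ P.support),
    MonoWalk G u (P.takeUntil s hs) ∧ MonoWalk G u (P.dropUntil t ht) ∧
    (∀ (s' : V) (hs' : s' ∈ P.support), MonoWalk G u (P.takeUntil s' hs') →
      (P.takeUntil s' hs').length ≤ (P.takeUntil s hs).length) ∧
    (∀ (t' : V) (ht' : t' ∈ P.support), MonoWalk G u (P.dropUntil t' ht') →
      (P.dropUntil t' ht').length ≤ (P.dropUntil t ht).length)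

/-- `(W1, W2)` is a pair of wings for the quadruple `(a, b, c, d)` in `G`
(with respect to heights measured from `u`): `W1` is a monotone `c`-`a*`-path
containing `a`, `W2` is a monotone `b`-`d*`-path containing `d`,
`h(a*) + 1 = h(a) = h(b) ≤ h(c) = h(d) = h(d*) - 1`, `W1 - c` is anticomplete
to `W2`, and `W1` is anticomplete to `W2 - b`. -/
def IsWingPair (G : SimpleGraph V) (u : V) (a b c d : V) {astar dstar : V}
    (W1 : G.Walk c astar) (W2 : G.Walk b dstar) : Prop :=
  W1.IsPath ∧ W2.IsPath ∧ MonoWalk G u W1 ∧ MonoWalk G u W2 ∧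
  a ∈ W1.support ∧ d ∈ W2.support ∧
  G.dist u astar + 1 = G.dist u a ∧ G.dist u a = G.dist u b ∧
  G.dist u b ≤ G.dist u c ∧ G.dist u c = G.dist u d ∧
  G.dist u d + 1 = G.dist u dstar ∧
  Anticomplete G {x | x ∈ W1.support ∧ x ≠ c} {x | x ∈ W2.support} ∧
  Anticomplete G {x | x ∈ W1.support} {x | x ∈ W2.support ∧ x ≠ b}

/-- The quadruple `(a, b, c, d)` is winged in `G`. -/
def Winged (G : SimpleGraph V) (u : V) (a b c d : V) : Prop :=
  ∃ (astar dstar : V) (W1 : G.Walk c astar) (W2 : G.Walk b dstar),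
    IsWingPair G u a b c d W1 W2

/-- The quadruple `(a, b, c, d)` admits a pair of wings `(W1, W2)` in `G` with
`W1` anticomplete to `W2`. -/
def WingedAnti (G : SimpleGraph V) (u : V) (a b c d : V) : Prop :=
  ∃ (astar dstar : V) (W1 : G.Walk c astar) (W2 : G.Walk b dstar),
    IsWingPair G u a b c d W1 W2 ∧
    Anticomplete G {x | x ∈ W1.support} {x | x ∈ W2.support}

/-- For a `uv`-trail `P` of a `uv`-straight graph `G` with twist pair `(s, t)`,
a monotone `uc`-path `S` of `G` with `h(c) = h(s)` is a sidetrack for `P` if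
(S1) `G` contains a monotone `tv`-path `T` with `S - c` anticomplete to `T` and
`S` anticomplete to `T - t`, and (S2) `S` contains the vertex `a` of `P[u,s]`
with `h(a) = h(t)`. -/
def IsSidetrack [DecidableEq V] (G : SimpleGraph V) (u v : V) (P : G.Walk u v)
    (s t : V) {c : V} (S : G.Walk u c) : Prop :=
  S.IsPath ∧ MonoWalk G u S ∧ G.dist u c = G.dist u s ∧
  (∃ (T : G.Walk t v), T.IsPath ∧ MonoWalk G u T ∧
    Anticomplete G {x | x ∈ S.support ∧ x ≠ c} {x | x ∈ T.support} ∧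
    Anticomplete G {x | x ∈ S.support} {x | x ∈ T.support ∧ x ≠ t}) ∧
  (∀ (hs : s ∈ P.support) (a : V),
    a ∈ (P.takeUntil s hs).support → G.dist u a = G.dist u t → a ∈ S.support)

/-!
Heights change by at most one along an edge, so a walk from `u` whose heights never repeat
climbs by exactly one per step and is a shortest path; conversely a shortest path from `u` is
monotone. If `P` is shortest, its maximal monotone prefix is all of `P`, so both segments of the
twist pair contain `v`. If instead `P[u,s]` and `P[t,v]` meet, then `t` lies on `P[u,s]`, so
`P[u,t]` is monotone and has length `d(u,t)`. In a `uv`-straight graph `d(x,v) = d(u,v) - h(x)`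
for every `x`, so the monotone path `P[t,v]` is also monotone for heights measured from `v` and
has length `d(t,v)`; hence `P` has length `d(u,t) + d(t,v) = d(u,v)`.
-/

namespace SimpleGraph.Walk

variable {G : SimpleGraph V}

/-- The second conjunct drives the induction: a new height that avoids `0, …, d` and is at most
`d + 1` must be `d + 1`. -/
lemma length_eq_dist_of_nodup_map_dist {c w : V} (W : G.Walk c w)
    (h : (W.support.map (G.dist w)).Nodup) :
    W.length = G.dist w c ∧ ∀ k ≤ W.length, k ∈ W.support.map (G.dist w) := by
  induction W with
  | nil => simp
  | @cons c c' w hadj W ih =>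
    rw [support_cons, List.map_cons, List.nodup_cons] at h
    obtain ⟨ihlen, ihcover⟩ := ih h.2
    have hstep : G.dist w c ≤ W.length + 1 := by
      simpa using G.dist_le (Walk.cons hadj W).reverse
    have hgt : G.dist w c' < G.dist w c := by
      by_contra! hle
      exact h.1 (ihcover _ (ihlen ▸ hle))
    refine ⟨by simp only [length_cons]; omega, fun k hk => ?_⟩
    rw [support_cons, List.map_cons, List.mem_cons]
    rcases Nat.lt_or_ge k (W.length + 1) with hk' | hk'
    · exact Or.inr (ihcover k (by omega))
    · left; simp only [length_cons] at hk; omega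

section Decomp

variable [DecidableEq V]

lemma mem_support_takeUntil_or_mem_support_takeUntil {a b x y : V} (P : G.Walk a b)
    (hx : x ∈ P.support) (hy : y ∈ P.support) :
    y ∈ (P.takeUntil x hx).support ∨ x ∈ (P.takeUntil y hy).support :=
  (List.prefix_or_prefix_of_prefix (P.support_takeUntil_prefix_support hx)
    (P.support_takeUntil_prefix_support hy)).symm.imp
    (fun h => h.subset (end_mem_support _)) (fun h => h.subset (end_mem_support _))

lemma IsPath.eq_of_mem_takeUntil_of_mem_dropUntil {a b w x : V} {P : G.Walk a b}
    (hP : P.IsPath) (hw : w ∈ P.support) (hxt : x ∈ (P.takeUntil w hw).support)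
    (hxd : x ∈ (P.dropUntil w hw).support) : x = w := by
  by_contra hxw
  have hnodup := hP.support_nodup
  rw [← P.take_spec hw, support_append] at hnodup
  rw [← cons_tail_support, List.mem_cons] at hxd
  exact List.disjoint_of_nodup_append hnodup hxt (hxd.resolve_left hxw)

lemma IsPath.mem_takeUntil_of_mem_takeUntil_of_mem_dropUntil {a b s t x : V} {P : G.Walk a b}
    (hP : P.IsPath) (hs : s ∈ P.support) (ht : t ∈ P.support)
    (hxs : x ∈ (P.takeUntil s hs).support) (hxt : x ∈ (P.dropUntil t ht).support) :
    t ∈ (P.takeUntil s hs).support := by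
  rcases P.mem_support_takeUntil_or_mem_support_takeUntil ht hs with hst | hts
  · have hxt' : x ∈ (P.takeUntil t ht).support :=
      (P.takeUntil t ht).support_takeUntil_subset_support hst (by rwa [takeUntil_takeUntil])
    rwa [← hP.eq_of_mem_takeUntil_of_mem_dropUntil ht hxt' hxt]
  · exact hts

end Decomp

end SimpleGraph.Walk

section MonoWalk

variable {G : SimpleGraph V} {u : V}

lemma MonoWalk.reverse {x y : V} {W : G.Walk x y} (h : MonoWalk G u W) :
    MonoWalk G u W.reverse := by
  rwa [MonoWalk, Walk.support_reverse, List.map_reverse, List.nodup_reverse]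

lemma MonoWalk.takeUntil [DecidableEq V] {x y z : V} {W : G.Walk x y} (h : MonoWalk G u W)
    (hz : z ∈ W.support) : MonoWalk G u (W.takeUntil z hz) := by
  unfold MonoWalk at *
  rw [← W.take_spec hz, Walk.support_append, List.map_append] at h
  exact h.of_append_left

lemma MonoWalk.length_eq_dist {c : V} {W : G.Walk u c} (h : MonoWalk G u W) :
    W.length = G.dist u c := by
  simpa using (W.reverse.length_eq_dist_of_nodup_map_dist h.reverse).1

lemma monoWalk_of_length_eq_dist {c : V} {W : G.Walk u c}
    (h : W.length = G.dist u c) : MonoWalk G u W := by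
  classical
  have hdist : ∀ z (hz : z ∈ W.support), G.dist u z = W.support.idxOf z := fun z hz => by
    rw [← W.length_takeUntil hz, length_eq_dist_of_subwalk h (W.isSubwalk_takeUntil hz)]
  refine (W.isPath_of_length_eq_dist h).support_nodup.map_on fun x hx y hy hxy => ?_
  rwa [hdist x hx, hdist y hy, List.idxOf_inj hx] at hxy

end MonoWalk

section Straight

variable {G : SimpleGraph V} {u v : V}

lemma Straight.dist_add_dist (h : Straight G u v) (x : V) :
    G.dist u x + G.dist x v = G.dist u v := by
  classical
  obtain ⟨Q, ⟨-, hQ⟩, hx⟩ := h x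
  rw [← length_eq_dist_of_subwalk hQ (Q.isSubwalk_takeUntil hx),
    ← length_eq_dist_of_subwalk hQ (Q.isSubwalk_dropUntil hx), ← Walk.length_append,
    Q.take_spec hx, hQ]

/-- In a `uv`-straight graph the heights from `v` are the heights from `u` read backwards. -/
lemma Straight.monoWalk_swap (h : Straight G u v) {x y : V} {W : G.Walk x y}
    (hW : MonoWalk G u W) : MonoWalk G v W := by
  refine List.pairwise_map.mpr ((List.pairwise_map.mp hW).imp fun {a b} hab heq => hab ?_)
  have ha := h.dist_add_dist a
  have hb := h.dist_add_dist b
  rw [G.dist_comm (u := v), G.dist_comm (u := v)] at heq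
  omega

lemma Straight.length_eq_dist_of_monoWalk (h : Straight G u v) {x : V}
    {W : G.Walk x v} (hW : MonoWalk G u W) : W.length = G.dist x v := by
  simpa [G.dist_comm (u := v)] using (h.monoWalk_swap hW).reverse.length_eq_dist

end Straight

lemma IsTwistPair.eq_of_monoWalk [DecidableEq V] {G : SimpleGraph V} {u v s t : V}
    {P : G.Walk u v} (htw : IsTwistPair G u v P s t) (hP : MonoWalk G u P) : s = v := by
  obtain ⟨hs, -, -, -, hmax, -⟩ := htw
  by_contra hsv
  have hlt := P.length_takeUntil_lt_length hs hsv
  have hle := hmax v P.end_mem_support (hP.takeUntil _)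
  rw [(hP.takeUntil _).length_eq_dist, ← hP.length_eq_dist] at hle
  omega

theorem statement4_general [DecidableEq V] (G : SimpleGraph V) (u v : V)
    (hstraight : Straight G u v)
    (P : G.Walk u v) (hPpath : P.IsPath)
    (s t : V) (htwist : IsTwistPair G u v P s t)
    (hs : s ∈ P.support) (ht : t ∈ P.support) :
    (P.takeUntil s hs).support.Disjoint (P.dropUntil t ht).support ↔
      ¬ IsShortestPath G P := by
  constructor
  · rintro hdisj ⟨-, hlen⟩
    have hsv : s = v := htwist.eq_of_monoWalk (monoWalk_of_length_eq_dist hlen)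
    subst hsv
    exact hdisj (P.takeUntil s hs).end_mem_support (P.dropUntil t ht).end_mem_support
  · intro hnotShortest x hxs hxt
    obtain ⟨_, _, hmonoPre, hmonoSuf, -, -⟩ := htwist
    have hts := hPpath.mem_takeUntil_of_mem_takeUntil_of_mem_dropUntil hs ht hxs hxt
    have hmonoUT : MonoWalk G u (P.takeUntil t ht) := by
      simpa only [Walk.takeUntil_takeUntil] using hmonoPre.takeUntil hts
    refine hnotShortest ⟨hPpath, ?_⟩
    rw [← P.take_spec ht, Walk.length_append, hmonoUT.length_eq_dist,
      hstraight.length_eq_dist_of_monoWalk hmonoSuf, hstraight.dist_add_dist]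

/-- If `(s, t)` is the twist pair of a `uv`-path `P` of a
`uv`-straight graph `G`, then `P[u,s]` and `P[t,v]` are vertex-disjoint if and
only if `P` is not a shortest `uv`-path of `G`. -/
theorem statement4 [Fintype V] [DecidableEq V] (G : SimpleGraph V) (u v : V)
    (hstraight : Straight G u v)
    (P : G.Walk u v) (hPpath : P.IsPath)
    (s t : V) (htwist : IsTwistPair G u v P s t)
    (hs : s ∈ P.support) (ht : t ∈ P.support) :
    (P.takeUntil s hs).support.Disjoint (P.dropUntil t ht).support ↔
      ¬ IsShortestPath G P :=
  statement4_general G u v hstraight P hPpath s t htwist hs ht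
end

section
/- Let P be a shortest uv-trail of a uv-straight graph G with twist pair (s,t), and let a be the vertex of P[u,s] with h(a) = h(t). Let d be any vertex such that the quadruple (a,t,s,d) is winged in G, and let (W1,W2) be any pair of wings for (a,t,s,d) in G. Then every monotone us-path S of G containing W1 as a subpath is a sidetrack for P. -/
open SimpleGraph

variable {V : Type*}

/-!
Condition (S2) is immediate: `P[u,s]` is monotone, so `a` is its only vertex of height `h(t)`,
and `a` lies on `W1 ⊆ S`. For (S1), straightness gives a shortest `uv`-path through `dstar`;
its part above `dstar` is monotone and strictly above `h(dstar) = h(s) + 1`, so appending it to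
`W2` yields a monotone `tv`-path `T`. The part of `S` before `astar` lies strictly below
`h(astar) = h(t) - 1`. Vertices two levels apart are distinct and non-adjacent, so the
anticompleteness of the wings extends to `S` and `T`.
-/

namespace SimpleGraph

variable {G : SimpleGraph V}

lemma dist_le_dist_add_one_of_adj {x y : V} (u : V) (hxy : G.Adj x y) :
    G.dist u y ≤ G.dist u x + 1 := by
  rcases hxy.diff_dist_adj (u := u) with h | h | h <;> omega

lemma ne_and_not_adj_of_dist_add_two_le {x y : V} (u : V) (h : G.dist u x + 2 ≤ G.dist u y) :
    x ≠ y ∧ ¬ G.Adj x y :=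
  ⟨by rintro rfl; omega, fun hxy => by have := G.dist_le_dist_add_one_of_adj u hxy; omega⟩

lemma Walk.exists_mem_support_dist_eq (u : V) :
    ∀ {p q : V} (W : G.Walk p q) {k : ℕ}, k ∈ Set.uIcc (G.dist u p) (G.dist u q) →
      ∃ z ∈ W.support, G.dist u z = k
  | p, _, .nil, k, hk => ⟨p, by simp, by simp_all⟩
  | p, _, .cons (v := y) hpy W, k, hk => by
    by_cases hpk : G.dist u p = k
    · exact ⟨p, by simp, hpk⟩
    have h1 := G.dist_le_dist_add_one_of_adj u hpy
    have h2 := G.dist_le_dist_add_one_of_adj u hpy.symm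
    rw [Set.mem_uIcc] at hk
    obtain ⟨z, hz, rfl⟩ := W.exists_mem_support_dist_eq u (k := k) (by rw [Set.mem_uIcc]; omega)
    exact ⟨z, by simp [hz], rfl⟩

lemma Walk.map_dist_support_eq_range' {u v : V} :
    ∀ {x : V} (R : G.Walk x v), R.length = G.dist x v →
      G.dist u v = G.dist u x + G.dist x v →
      R.support.map (G.dist u) = List.range' (G.dist u x) (R.length + 1)
  | x, .nil, _, _ => by simp
  | x, .cons (v := y) hxy W, hR, hx => by
    have hxy' : G.dist x y = 1 := dist_eq_one_iff_adj.mpr hxy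
    have h1 : G.dist x v ≤ G.dist x y + G.dist y v := W.reachable.dist_triangle_right x
    have h2 : G.dist u y ≤ G.dist u x + G.dist x y := hxy.reachable.dist_triangle_right u
    have h3 : G.dist u v ≤ G.dist u y + G.dist y v := W.reachable.dist_triangle_right u
    have h4 : G.dist y v ≤ W.length := dist_le W
    rw [Walk.length_cons] at hR
    have hy : G.dist u y = G.dist u x + 1 := by omega
    rw [Walk.support_cons, List.map_cons, W.map_dist_support_eq_range' (by omega) (by omega), hy,
      Walk.length_cons]
    exact List.range'_succ.symm

lemma Walk.mem_support_append_iff_of_ne_left {x y z w : V} {p : G.Walk x y} {q : G.Walk y z} :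
    w ∈ (p.append q).support ↔ (w ∈ p.support ∧ w ≠ y) ∨ w ∈ q.support := by
  rw [Walk.mem_support_append_iff]
  by_cases h : w = y <;> simp [h]

lemma Walk.mem_support_append_iff_of_ne_right {x y z w : V} {p : G.Walk x y}
    {q : G.Walk y z} :
    w ∈ (p.append q).support ↔ w ∈ p.support ∨ (w ∈ q.support ∧ w ≠ y) := by
  rw [Walk.mem_support_append_iff]
  by_cases h : w = y <;> simp [h]

end SimpleGraph

open SimpleGraph

section MonoWalk

variable {G : SimpleGraph V} {u : V}

lemma MonoWalk.isPath {p q : V} {W : G.Walk p q} (hW : MonoWalk G u W) : W.IsPath :=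
  Walk.IsPath.mk' (List.Nodup.of_map _ hW)

lemma MonoWalk.eq_of_dist_eq {p q : V} {W : G.Walk p q} (hW : MonoWalk G u W) {y z : V}
    (hy : y ∈ W.support) (hz : z ∈ W.support) (h : G.dist u y = G.dist u z) : y = z :=
  List.inj_on_of_nodup_map hW hy hz h

lemma MonoWalk.of_append_left {p q r : V} {W : G.Walk p q} {W' : G.Walk q r}
    (hW : MonoWalk G u (W.append W')) : MonoWalk G u W := by
  rw [MonoWalk, Walk.support_append, List.map_append] at hW
  exact (List.nodup_append.mp hW).1

lemma MonoWalk.append {p q r : V} {W : G.Walk p q} {W' : G.Walk q r}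
    (hW : MonoWalk G u W) (hW' : MonoWalk G u W')
    (hle : ∀ z ∈ W.support, G.dist u z ≤ G.dist u q)
    (hlt : ∀ z ∈ W'.support, z ≠ q → G.dist u q < G.dist u z) :
    MonoWalk G u (W.append W') := by
  rw [MonoWalk, ← W'.cons_tail_support, List.map_cons, List.nodup_cons] at hW'
  rw [MonoWalk, Walk.support_append, List.map_append, List.nodup_append]
  refine ⟨hW, hW'.2, ?_⟩
  simp only [List.mem_map]
  rintro _ ⟨z, hz, rfl⟩ _ ⟨z', hz', rfl⟩ h
  have hz'q : z' ≠ q := by rintro rfl; exact hW'.1 (List.mem_map_of_mem hz')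
  have := hle z hz
  have := hlt z' (List.mem_of_mem_tail hz') hz'q
  omega

/-- A monotone walk cannot leave the height interval of its endpoints: it would have to come
back through a height it has already visited. -/
lemma MonoWalk.dist_mem_uIcc :
    ∀ {p q : V} {W : G.Walk p q}, MonoWalk G u W →
      ∀ z ∈ W.support, G.dist u z ∈ Set.uIcc (G.dist u p) (G.dist u q)
  | p, _, .nil, _, z, hz => by simp_all
  | p, q, .cons (v := y) hpy W, hm, z, hz => by
    rw [MonoWalk, Walk.support_cons, List.map_cons, List.nodup_cons] at hm
    obtain ⟨hp, hW⟩ := hm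
    have hpW : G.dist u p ∉ Set.uIcc (G.dist u y) (G.dist u q) := fun hk => by
      obtain ⟨z, hz, hzp⟩ := W.exists_mem_support_dist_eq u hk
      exact hp (hzp ▸ List.mem_map_of_mem hz)
    have h1 := G.dist_le_dist_add_one_of_adj u hpy
    have h2 := G.dist_le_dist_add_one_of_adj u hpy.symm
    rw [Walk.support_cons, List.mem_cons] at hz
    rcases hz with rfl | hz
    · exact Set.left_mem_uIcc
    · have := MonoWalk.dist_mem_uIcc hW z hz
      rw [Set.mem_uIcc] at this hpW ⊢
      omega

end MonoWalk

section Anticomplete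

variable {G : SimpleGraph V}

lemma Anticomplete.mono {X₁ X₂ Y₁ Y₂ : Set V} (h : Anticomplete G X₂ Y₂) (hX : X₁ ⊆ X₂)
    (hY : Y₁ ⊆ Y₂) : Anticomplete G X₁ Y₁ :=
  fun x hx y hy => h x (hX hx) y (hY hy)

lemma Anticomplete.union_of_dist_add_two_le (u : V) {X X' Y Y' : Set V}
    (h : Anticomplete G X Y)
    (hX' : ∀ x ∈ X', ∀ y ∈ Y ∪ Y', G.dist u x + 2 ≤ G.dist u y)
    (hY' : ∀ x ∈ X, ∀ y ∈ Y', G.dist u x + 2 ≤ G.dist u y) :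
    Anticomplete G (X ∪ X') (Y ∪ Y') := by
  rintro x (hx | hx) y hy
  · rcases hy with hy | hy
    · exact h x hx y hy
    · exact G.ne_and_not_adj_of_dist_add_two_le u (hY' x hx y hy)
  · exact G.ne_and_not_adj_of_dist_add_two_le u (hX' x hx y hy)

end Anticomplete

/-- The tail of a shortest `uv`-path through `x` climbs from `x` to `v` one height at a time. -/
lemma Straight.exists_ascending_monoWalk {G : SimpleGraph V} {u v : V}
    (hstraight : Straight G u v) (x : V) :
    ∃ T : G.Walk x v, MonoWalk G u T ∧ ∀ z ∈ T.support, z ≠ x → G.dist u x < G.dist u z := by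
  classical
  obtain ⟨R, ⟨-, hRlen⟩, hx⟩ := hstraight x
  set T := R.dropUntil x hx
  have hsplit : (R.takeUntil x hx).length + T.length = R.length := by
    rw [← Walk.length_append, Walk.take_spec]
  have h1 : G.dist u x ≤ (R.takeUntil x hx).length := dist_le _
  have h2 : G.dist x v ≤ T.length := dist_le _
  have h3 : G.dist u v ≤ G.dist u x + G.dist x v := T.reachable.dist_triangle_right u
  have hheights := T.map_dist_support_eq_range' (u := u) (by omega) (by omega)
  have hmono : MonoWalk G u T := by
    rw [MonoWalk, hheights]
    exact List.nodup_range'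
  refine ⟨T, hmono, fun z hz hzx => ?_⟩
  have hle : G.dist u x ≤ G.dist u z :=
    (List.mem_range'_1.mp (hheights ▸ List.mem_map_of_mem hz)).1
  have hne : G.dist u z ≠ G.dist u x := fun h =>
    hzx (hmono.eq_of_dist_eq hz T.start_mem_support h)
  omega

lemma IsWingPair.exists_monoWalk_anticomplete {G : SimpleGraph V} {u v a b c d astar dstar : V}
    {W1 : G.Walk c astar} {W2 : G.Walk b dstar} (hwings : IsWingPair G u a b c d W1 W2)
    (hstraight : Straight G u v) {S0 : G.Walk u astar}
    (hS : MonoWalk G u (S0.append W1.reverse)) :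
    ∃ T : G.Walk b v, T.IsPath ∧ MonoWalk G u T ∧
      Anticomplete G {x | x ∈ (S0.append W1.reverse).support ∧ x ≠ c} {x | x ∈ T.support} ∧
      Anticomplete G {x | x ∈ (S0.append W1.reverse).support} {x | x ∈ T.support ∧ x ≠ b} := by
  obtain ⟨-, -, hW1, hW2, -, -, hastar, hab, hbc, hcd, hdstar, hanti₁, hanti₂⟩ := hwings
  obtain ⟨T2, hT2, hT2asc⟩ := hstraight.exists_ascending_monoWalk dstar
  have hS0 := hS.of_append_left
  set S0' : Set V := {z | z ∈ S0.support ∧ z ≠ astar}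
  set T2' : Set V := {z | z ∈ T2.support ∧ z ≠ dstar}
  have hW2dist : ∀ z ∈ W2.support, G.dist u b ≤ G.dist u z ∧ G.dist u z ≤ G.dist u dstar :=
    fun z hz => by have := hW2.dist_mem_uIcc z hz; rw [Set.mem_uIcc] at this; omega
  have hlow : ∀ x ∈ S0', ∀ y ∈ {z | z ∈ W2.support} ∪ T2', G.dist u x + 2 ≤ G.dist u y := by
    rintro x ⟨hx, hxa⟩ y hy
    have hxa' : G.dist u x ≠ G.dist u astar := fun h =>
      hxa (hS0.eq_of_dist_eq hx S0.end_mem_support h)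
    have := hS0.dist_mem_uIcc x hx
    rw [Set.mem_uIcc, dist_self] at this
    rcases hy with hy | ⟨hy, hyd⟩
    · have := hW2dist y hy; omega
    · have := hT2asc y hy hyd; omega
  have hhigh : ∀ x ∈ W1.support, ∀ y ∈ T2', G.dist u x + 2 ≤ G.dist u y := by
    rintro x hx y ⟨hy, hyd⟩
    have hx' := hW1.dist_mem_uIcc x hx
    have := hT2asc y hy hyd
    rw [Set.mem_uIcc] at hx'
    omega
  have hS_sub : ∀ x ∈ (S0.append W1.reverse).support, x ∈ S0' ∨ x ∈ W1.support := fun x hx =>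
    (Walk.mem_support_append_iff_of_ne_left.mp hx).imp id (by simpa using ·)
  have hT : MonoWalk G u (W2.append T2) := hW2.append hT2 (fun z hz => (hW2dist z hz).2) hT2asc
  refine ⟨W2.append T2, hT.isPath, hT, ?_, ?_⟩
  · refine (hanti₁.union_of_dist_add_two_le u hlow fun x hx => hhigh x hx.1).mono ?_
      fun y hy => Walk.mem_support_append_iff_of_ne_right.mp hy
    rintro x ⟨hx, hxc⟩
    exact (hS_sub x hx).symm.imp (fun h => ⟨h, hxc⟩) id
  · refine (hanti₂.union_of_dist_add_two_le u (fun x hx y hy => hlow x hx y (hy.imp And.left id))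
      hhigh).mono (fun x hx => (hS_sub x hx).symm) ?_
    rintro y ⟨hy, hyb⟩
    exact (Walk.mem_support_append_iff_of_ne_right.mp hy).imp (fun h => ⟨h, hyb⟩) id

theorem statement9_general [DecidableEq V] (G : SimpleGraph V) (u v : V)
    (hstraight : Straight G u v)
    (P : G.Walk u v)
    (s t : V) (htwist : IsTwistPair G u v P s t)
    (hs : s ∈ P.support)
    (a : V) (ha : a ∈ (P.takeUntil s hs).support)
    (hha : G.dist u a = G.dist u t)
    (d astar dstar : V) (W1 : G.Walk s astar) (W2 : G.Walk t dstar)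
    (hwings : IsWingPair G u a t s d W1 W2)
    (S : G.Walk u s) (hSmono : MonoWalk G u S)
    (hSsub : ∃ S0 : G.Walk u astar, S = S0.append W1.reverse) :
    IsSidetrack G u v P s t S := by
  obtain ⟨S0, rfl⟩ := hSsub
  refine ⟨hSmono.isPath, hSmono, rfl, hwings.exists_monoWalk_anticomplete hstraight hSmono, ?_⟩
  intro _ a' ha' hha'
  obtain ⟨_, _, hprefix, -, -, -⟩ := htwist
  obtain rfl : a' = a := hprefix.eq_of_dist_eq ha' ha (hha'.trans hha.symm)
  obtain ⟨-, -, -, -, haW1, -⟩ := hwings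
  exact (Walk.mem_support_append_iff _ _).mpr (.inr (by simpa using haW1))

/-- Let `P` be a shortest `uv`-trail of a `uv`-straight graph
`G` with twist pair `(s, t)`, let `a` be the vertex of `P[u,s]` with
`h(a) = h(t)`, let `d` be any vertex such that `(a, t, s, d)` is winged in `G`,
and let `(W1, W2)` be any pair of wings for `(a, t, s, d)` in `G`. Then every
monotone `us`-path `S` of `G` containing `W1` as a subpath is a sidetrack for
`P`. -/
theorem statement9 [Fintype V] [DecidableEq V] (G : SimpleGraph V) (u v : V)
    (hstraight : Straight G u v)
    (P : G.Walk u v) (hP : IsShortestTrail G u v P)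
    (s t : V) (htwist : IsTwistPair G u v P s t)
    (hs : s ∈ P.support)
    (a : V) (ha : a ∈ (P.takeUntil s hs).support)
    (hha : G.dist u a = G.dist u t)
    (d astar dstar : V) (W1 : G.Walk s astar) (W2 : G.Walk t dstar)
    (hwings : IsWingPair G u a t s d W1 W2)
    (S : G.Walk u s) (hSpath : S.IsPath) (hSmono : MonoWalk G u S)
    (hSsub : ∃ S0 : G.Walk u astar, S = S0.append W1.reverse) :
    IsSidetrack G u v P s t S :=
  statement9_general G u v hstraight P s t htwist hs a ha hha d astar dstar W1 W2 hwings S hSmono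
    hSsub
end
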